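/- arXiv:1308.2659 — 2 statements merged into one kernel-verified Lean document; each statement's English description precedes it below -/
import Mathlib

section
/- Stability of Tikhonov minimizers under data perturbation: under the assumptions that X, Y are reflexive Banach spaces, D convex closed, F : D → Y sequentially weakly closed and norm-to-weak continuous, f proper convex weakly lower semicontinuous coercive, β > 0 fixed: if u_k → u in norm in Y and a_k minimizes a ↦ ‖F(a) − u_k‖² + β f(a) over D, then (a_k) has a weakly convergent subsequence, and every weak limit of a subsequence minimizes a ↦ ‖F(a) − u‖² + β f(a) over D. -/
open Filter

/-- Weak convergence of a sequence in a normed space. -/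
def WeakConv {E : Type*} [NormedAddCommGroup E] [NormedSpace ℝ E]
    (s : ℕ → E) (a : E) : Prop :=
  ∀ φ : E →L[ℝ] ℝ, Tendsto (fun k => φ (s k)) atTop (nhds (φ a))

/-- Sequential weak compactness of bounded sets: the Eberlein–Šmulian
characterization of reflexivity for a Banach space. -/
def Reflexive' (E : Type*) [NormedAddCommGroup E] [NormedSpace ℝ E] : Prop :=
  ∀ s : ℕ → E, (∃ M : ℝ, ∀ k, ‖s k‖ ≤ M) →
    ∃ σ : ℕ → ℕ, StrictMono σ ∧ ∃ a : E, WeakConv (s ∘ σ) a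

/-- A real sequence bounded from some index on is bounded. -/
lemma bdd_of_eventually_bdd (g : ℕ → ℝ) (N : ℕ) (B : ℝ)
    (h : ∀ k, N ≤ k → g k ≤ B) : ∃ M, ∀ k, g k ≤ M := by
  refine ⟨max B ((Finset.range (N + 1)).sup' Finset.nonempty_range_add_one g), fun k => ?_⟩
  rcases le_or_gt N k with hk | hk
  · exact le_max_of_le_left (h k hk)
  · exact le_max_of_le_right (Finset.le_sup' g (by simp [Finset.mem_range]; omega))

lemma le_max_one_of_sq_le {x C : ℝ} (hx : 0 ≤ x) (h : x ^ 2 ≤ C) : x ≤ max 1 C := by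
  rcases le_or_gt x 1 with h1 | h1
  · exact le_max_of_le_left h1
  · refine le_max_of_le_right ?_
    nlinarith

/-- stability of Tikhonov minimizers under data perturbation.
If `u_k → u` in norm and `a_k` minimizes `a ↦ ‖F a − u_k‖² + β f a` over `D`,
then `(a_k)` has a weakly convergent subsequence, and every weak limit of a
subsequence minimizes `a ↦ ‖F a − u‖² + β f a` over `D`. -/
theorem tikhonov_stability
    {X Y : Type*} [NormedAddCommGroup X] [NormedSpace ℝ X] [CompleteSpace X]
    [NormedAddCommGroup Y] [NormedSpace ℝ Y] [CompleteSpace Y]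
    (hreflX : Reflexive' X) (hreflY : Reflexive' Y)
    (D : Set X) (hDne : D.Nonempty) (hDconv : Convex ℝ D) (hDclosed : IsClosed D)
    (F : X → Y)
    (hFwc : ∀ (s : ℕ → X) (a : X) (v : Y), (∀ k, s k ∈ D) →
      WeakConv s a → WeakConv (fun k => F (s k)) v → a ∈ D ∧ F a = v)
    (hFcont : ∀ (s : ℕ → X) (a : X), (∀ k, s k ∈ D) → a ∈ D →
      Tendsto s atTop (nhds a) → WeakConv (fun k => F (s k)) (F a))
    (f : X → ℝ) (hfnonneg : ∀ a, 0 ≤ f a) (hfconv : ConvexOn ℝ Set.univ f)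
    (hfwlsc : ∀ (s : ℕ → X) (a : X), WeakConv s a →
      f a ≤ liminf (fun k => f (s k)) atTop)
    (hfcoercive : ∀ s : ℕ → X, Tendsto (fun k => ‖s k‖) atTop atTop →
      Tendsto (fun k => f (s k)) atTop atTop)
    (β : ℝ) (hβ : 0 < β) (u : Y) (uk : ℕ → Y)
    (hu : Tendsto uk atTop (nhds u))
    (ak : ℕ → X) (hmin : ∀ k, ak k ∈ D ∧ ∀ a ∈ D,
      ‖F (ak k) - uk k‖ ^ 2 + β * f (ak k) ≤ ‖F a - uk k‖ ^ 2 + β * f a) :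
    (∃ σ : ℕ → ℕ, StrictMono σ ∧ ∃ a : X, WeakConv (ak ∘ σ) a) ∧
    (∀ (σ : ℕ → ℕ) (a : X), StrictMono σ → WeakConv (ak ∘ σ) a →
      a ∈ D ∧ ∀ b ∈ D, ‖F a - u‖ ^ 2 + β * f a ≤ ‖F b - u‖ ^ 2 + β * f b) := by
  obtain ⟨a₀, ha₀⟩ := hDne
  -- the perturbed data is uniformly close to u
  obtain ⟨U, hU⟩ : ∃ U, ∀ k, ‖uk k - u‖ ≤ U := by
    have h0 : Tendsto (fun k => ‖uk k - u‖) atTop (nhds 0) :=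
      tendsto_iff_norm_sub_tendsto_zero.mp hu
    obtain ⟨N, hN⟩ := (h0.eventually (eventually_lt_nhds one_pos)).exists_forall_of_atTop
    exact bdd_of_eventually_bdd _ N 1 fun k hk => (hN k hk).le
  have hU0 : 0 ≤ U := le_trans (norm_nonneg _) (hU 0)
  set C : ℝ := (‖F a₀ - u‖ + U) ^ 2 + β * f a₀ with hCdef
  -- uniform bound on the Tikhonov functional values
  have hC1 : ∀ k, ‖F (ak k) - uk k‖ ^ 2 + β * f (ak k) ≤ C := by
    intro k
    have h1 := (hmin k).2 a₀ ha₀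
    have h2 : ‖F a₀ - uk k‖ ≤ ‖F a₀ - u‖ + U := by
      have : F a₀ - uk k = (F a₀ - u) - (uk k - u) := by abel
      rw [this]
      exact le_trans (norm_sub_le _ _) (by linarith [hU k])
    have h3 : ‖F a₀ - uk k‖ ^ 2 ≤ (‖F a₀ - u‖ + U) ^ 2 :=
      pow_le_pow_left₀ (norm_nonneg _) h2 2
    calc ‖F (ak k) - uk k‖ ^ 2 + β * f (ak k) ≤ ‖F a₀ - uk k‖ ^ 2 + β * f a₀ := h1
      _ ≤ C := by rw [hCdef]; linarith
  have hf_bd : ∀ k, f (ak k) ≤ C / β := by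
    intro k
    rw [le_div_iff₀ hβ]
    nlinarith [hC1 k, sq_nonneg ‖F (ak k) - uk k‖]
  have hF_bd : ∀ k, ‖F (ak k)‖ ≤ max 1 C + (‖u‖ + U) := by
    intro k
    have h1 : ‖F (ak k) - uk k‖ ^ 2 ≤ C := by
      nlinarith [hC1 k, mul_nonneg hβ.le (hfnonneg (ak k))]
    have h2 : ‖F (ak k) - uk k‖ ≤ max 1 C := le_max_one_of_sq_le (norm_nonneg _) h1
    have h3 : ‖uk k‖ ≤ ‖u‖ + U := by
      have : uk k = u + (uk k - u) := by abel
      rw [this]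
      exact le_trans (norm_add_le _ _) (by linarith [hU k])
    calc ‖F (ak k)‖ = ‖(F (ak k) - uk k) + uk k‖ := by rw [sub_add_cancel]
      _ ≤ ‖F (ak k) - uk k‖ + ‖uk k‖ := norm_add_le _ _
      _ ≤ max 1 C + (‖u‖ + U) := by linarith
  -- boundedness of the minimizers
  have hak_bd : ∃ M, ∀ k, ‖ak k‖ ≤ M := by
    by_contra h
    push_neg at h
    have hfreq : ∀ n : ℕ, ∃ᶠ k in atTop, (n : ℝ) < ‖ak k‖ := by
      intro n
      rw [frequently_atTop]
      intro N
      by_contra hc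
      push_neg at hc
      obtain ⟨M, hM⟩ := bdd_of_eventually_bdd (fun k => ‖ak k‖) N n (fun k hk => hc k hk)
      obtain ⟨k, hk⟩ := h M
      exact absurd (hM k) (not_le.mpr hk)
    obtain ⟨φ, hφmono, hφ⟩ := Filter.extraction_forall_of_frequently hfreq
    have htop : Tendsto (fun n => ‖(ak ∘ φ) n‖) atTop atTop :=
      tendsto_atTop_mono (fun n => (hφ n).le) tendsto_natCast_atTop_atTop
    have hcoer := hfcoercive (ak ∘ φ) htop
    obtain ⟨k, hk⟩ := (hcoer.eventually_gt_atTop (C / β)).exists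
    exact absurd (hf_bd (φ k)) (not_le.mpr hk)
  refine ⟨hreflX ak hak_bd, ?_⟩
  intro σ a hσ hwa
  -- extract a weakly convergent subsequence of F (a_k)
  obtain ⟨τ, hτ, v, hv⟩ := hreflY (fun k => F (ak (σ k)))
    ⟨max 1 C + (‖u‖ + U), fun k => hF_bd _⟩
  set s : ℕ → X := fun k => ak (σ (τ k)) with hsdef
  have hsD : ∀ k, s k ∈ D := fun k => (hmin _).1
  have hws : WeakConv s a := fun ψ => (hwa ψ).comp hτ.tendsto_atTop
  have hwF : WeakConv (fun k => F (s k)) v := fun ψ => hv ψ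
  obtain ⟨haD, haF⟩ := hFwc s a v hsD hws hwF
  refine ⟨haD, fun b hb => ?_⟩
  obtain ⟨ψ, hψnorm, hψval⟩ := exists_dual_vector'' ℝ (F a - u)
  have hust : Tendsto (fun k => uk (σ (τ k))) atTop (nhds u) :=
    hu.comp (hσ.comp hτ).tendsto_atTop
  have hφy : Tendsto (fun k => ψ (F (s k) - uk (σ (τ k)))) atTop (nhds ‖F a - u‖) := by
    have h1 : Tendsto (fun k => ψ (F (s k))) atTop (nhds (ψ v)) := hwF ψ
    have h2 : Tendsto (fun k => ψ (uk (σ (τ k)))) atTop (nhds (ψ u)) :=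
      (ψ.continuous.tendsto u).comp hust
    have h3 := h1.sub h2
    have h4 : ψ v - ψ u = ‖F a - u‖ := by
      rw [← haF, ← map_sub]; exact_mod_cast hψval
    simpa [map_sub, h4] using h3
  have hφy2 : Tendsto (fun k => (ψ (F (s k) - uk (σ (τ k)))) ^ 2) atTop
      (nhds (‖F a - u‖ ^ 2)) := hφy.pow 2
  have hsq : ∀ k, (ψ (F (s k) - uk (σ (τ k)))) ^ 2 ≤ ‖F (s k) - uk (σ (τ k))‖ ^ 2 := by
    intro k
    have h1 : ‖ψ (F (s k) - uk (σ (τ k)))‖ ≤ ‖F (s k) - uk (σ (τ k))‖ := by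
      calc ‖ψ (F (s k) - uk (σ (τ k)))‖ ≤ ‖ψ‖ * ‖F (s k) - uk (σ (τ k))‖ := ψ.le_opNorm _
        _ ≤ 1 * ‖F (s k) - uk (σ (τ k))‖ := by
            exact mul_le_mul_of_nonneg_right hψnorm (norm_nonneg _)
        _ = ‖F (s k) - uk (σ (τ k))‖ := one_mul _
    rw [Real.norm_eq_abs] at h1
    nlinarith [abs_nonneg (ψ (F (s k) - uk (σ (τ k)))), sq_abs (ψ (F (s k) - uk (σ (τ k))))]
  have hflim : f a ≤ liminf (fun k => f (s k)) atTop := hfwlsc s a hws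
  have hTt : Tendsto (fun k => ‖F b - uk (σ (τ k))‖ ^ 2 + β * f b) atTop
      (nhds (‖F b - u‖ ^ 2 + β * f b)) := by
    have h1 : Tendsto (fun k => F b - uk (σ (τ k))) atTop (nhds (F b - u)) :=
      tendsto_const_nhds.sub hust
    exact (h1.norm.pow 2).add tendsto_const_nhds
  apply le_of_forall_pos_le_add
  intro ε hε
  have hε3 : 0 < ε / 3 := by linarith
  have h1 : ∀ᶠ k in atTop,
      ‖F a - u‖ ^ 2 - ε / 3 < (ψ (F (s k) - uk (σ (τ k)))) ^ 2 :=
    hφy2.eventually (eventually_gt_nhds (by linarith))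
  have hfb_lb : IsBoundedUnder (· ≥ ·) atTop (fun k => f (s k)) :=
    ⟨0, eventually_map.mpr (Eventually.of_forall fun k => hfnonneg _)⟩
  have h2 : ∀ᶠ k in atTop, f a - ε / (3 * β) < f (s k) := by
    refine eventually_lt_of_lt_liminf (lt_of_lt_of_le ?_ hflim) hfb_lb
    have : 0 < ε / (3 * β) := by positivity
    linarith
  have h3 : ∀ᶠ k in atTop,
      ‖F b - uk (σ (τ k))‖ ^ 2 + β * f b < ‖F b - u‖ ^ 2 + β * f b + ε / 3 :=
    hTt.eventually (eventually_lt_nhds (by linarith))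
  obtain ⟨k, hk1, hk2, hk3⟩ := (h1.and (h2.and h3)).exists
  have hmink := (hmin (σ (τ k))).2 b hb
  have hb2 : β * f a < β * f (s k) + ε / 3 := by
    have hm := mul_lt_mul_of_pos_left hk2 hβ
    have h' : β * (ε / (3 * β)) = ε / 3 := by
      field_simp
    rw [mul_sub, h'] at hm
    linarith
  have hsqk := hsq k
  linarith [hk1, hsqk, hb2, hmink, hk3]
end

section
/- Convergence of regularized solutions with vanishing noise: let β : (0,∞) → (0,∞) satisfy β(δ) → 0 and δ²/β(δ) → 0 as δ → 0. Let δ_k → 0, ‖ū − u_k‖ ≤ δ_k, β_k = β(δ_k), and let a_k minimize ‖F(a) − u_k‖² + β_k f(a) over D. Assume there exists a solution a* ∈ D of F(a) = ū. Then (a_k) has a weakly convergent subsequence, and every weak limit a† of a subsequence satisfies F(a†) = ū and f(a†) ≤ f(a) for all a ∈ D with F(a) = ū. -/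
open Filter

open Topology

/-! Comparing the minimiser `a_k` with an exact solution `a` of `F a = ū` gives
`‖F a_k − u_k‖² + β_k f a_k ≤ δ_k² + β_k f a`. Dividing by `β_k` bounds `f a_k` by
`f a + δ_k²/β_k`, so the minimisers are bounded by coercivity and have a weakly convergent
subsequence; dropping the penalty shows `F a_k → ū` in norm. Weak sequential closedness of
`F` then makes every weak limit a solution, and weak lower semicontinuity together with
`δ_k²/β_k → 0` makes it `f`-minimising. -/

def tikhonov {X Y : Type*} [Norm Y] [Sub Y] (F : X → Y) (f : X → ℝ) (β : ℝ) (u : Y)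
    (a : X) : ℝ :=
  ‖F a - u‖ ^ 2 + β * f a

section TikhonovEstimates

variable {X Y : Type*} [SeminormedAddCommGroup Y] {F : X → Y} {f : X → ℝ} {D : Set X}
  {β δ : ℝ} {u ubar : Y} {a b : X}

theorem tikhonov_le_of_isMinOn (hmin : IsMinOn (tikhonov F f β u) D b)
    (hnoise : ‖ubar - u‖ ≤ δ) (ha : a ∈ D) (hFa : F a = ubar) :
    tikhonov F f β u b ≤ δ ^ 2 + β * f a := by
  refine (isMinOn_iff.1 hmin a ha).trans ?_
  unfold tikhonov
  rw [hFa]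
  gcongr

theorem le_div_add_of_isMinOn_tikhonov (hβ : 0 < β)
    (hmin : IsMinOn (tikhonov F f β u) D b) (hnoise : ‖ubar - u‖ ≤ δ) (ha : a ∈ D)
    (hFa : F a = ubar) :
    f b ≤ δ ^ 2 / β + f a := by
  have h := tikhonov_le_of_isMinOn hmin hnoise ha hFa
  unfold tikhonov at h
  rw [div_add' _ _ _ hβ.ne', le_div_iff₀ hβ]
  nlinarith [sq_nonneg ‖F b - u‖]

theorem norm_sub_sq_le_of_isMinOn_tikhonov (hβ : 0 ≤ β) (hfb : 0 ≤ f b)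
    (hmin : IsMinOn (tikhonov F f β u) D b) (hnoise : ‖ubar - u‖ ≤ δ) (ha : a ∈ D)
    (hFa : F a = ubar) :
    ‖F b - u‖ ^ 2 ≤ δ ^ 2 + β * f a := by
  have h := tikhonov_le_of_isMinOn hmin hnoise ha hFa
  unfold tikhonov at h
  nlinarith [mul_nonneg hβ hfb]

end TikhonovEstimates

theorem exists_norm_le_of_coercive {X ι : Type*} [Norm X] {f : X → ℝ}
    (hf : ∀ s : ℕ → X, Tendsto (fun k => ‖s k‖) atTop atTop →
      Tendsto (fun k => f (s k)) atTop atTop)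
    {s : ι → X} {C : ℝ} (hC : ∀ i, f (s i) ≤ C) : ∃ M, ∀ i, ‖s i‖ ≤ M := by
  by_contra! h
  choose i hi using fun n : ℕ => h n
  have hnorm : Tendsto (fun n => ‖s (i n)‖) atTop atTop :=
    tendsto_atTop_mono (fun n => (hi n).le) tendsto_natCast_atTop_atTop
  obtain ⟨n, hn⟩ := ((hf _ hnorm).eventually_gt_atTop C).exists
  exact (hn.trans_le (hC (i n))).false

theorem tendsto_zero_of_norm_sq_le {α Y : Type*} [SeminormedAddCommGroup Y]
    {l : Filter α} {v : α → Y} {b : α → ℝ} (hv : ∀ k, ‖v k‖ ^ 2 ≤ b k)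
    (hb : Tendsto b l (𝓝 0)) :
    Tendsto v l (𝓝 0) := by
  rw [tendsto_zero_iff_norm_tendsto_zero]
  have hsq : Tendsto (fun k => ‖v k‖ ^ 2) l (𝓝 0) :=
    squeeze_zero (fun _ => sq_nonneg _) hv hb
  simpa using hsq.sqrt

theorem liminf_le_of_le_add_of_tendsto_zero {α : Type*} {l : Filter α} [l.NeBot]
    {x q : α → ℝ} {c : ℝ} (hx : IsBoundedUnder (· ≥ ·) l x) (h : ∀ k, x k ≤ q k + c)
    (hq : Tendsto q l (𝓝 0)) : liminf x l ≤ c := by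
  have hqc : Tendsto (fun k => q k + c) l (𝓝 c) := by simpa using hq.add_const c
  calc liminf x l ≤ liminf (fun k => q k + c) l :=
        liminf_le_liminf (.of_forall h) hx hqc.isCoboundedUnder_ge
    _ = c := hqc.liminf_eq

theorem weakConv_of_tendsto {E : Type*} [NormedAddCommGroup E] [NormedSpace ℝ E] {s : ℕ → E}
    {a : E} (h : Tendsto s atTop (𝓝 a)) : WeakConv s a :=
  fun φ => (φ.continuous.tendsto a).comp h

theorem tikhonov_convergence_general
    {X Y : Type*} [NormedAddCommGroup X] [NormedSpace ℝ X]
    [NormedAddCommGroup Y] [NormedSpace ℝ Y]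
    (hreflX : Reflexive' X)
    (D : Set X)
    (F : X → Y)
    (hFwc : ∀ (s : ℕ → X) (a : X) (v : Y), (∀ k, s k ∈ D) →
      WeakConv s a → WeakConv (fun k => F (s k)) v → a ∈ D ∧ F a = v)
    (f : X → ℝ) (hfnonneg : ∀ a, 0 ≤ f a)
    (hfwlsc : ∀ (s : ℕ → X) (a : X), WeakConv s a →
      f a ≤ liminf (fun k => f (s k)) atTop)
    (hfcoercive : ∀ s : ℕ → X, Tendsto (fun k => ‖s k‖) atTop atTop →
      Tendsto (fun k => f (s k)) atTop atTop)
    (β : ℝ → ℝ) (hβpos : ∀ δ > 0, 0 < β δ)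
    (hβ0 : Tendsto β (nhdsWithin 0 (Set.Ioi 0)) (nhds 0))
    (hδβ : Tendsto (fun δ => δ ^ 2 / β δ) (nhdsWithin 0 (Set.Ioi 0)) (nhds 0))
    (ubar : Y) (astar : X) (hastar : astar ∈ D) (hsol : F astar = ubar)
    (δk : ℕ → ℝ) (hδpos : ∀ k, 0 < δk k) (hδ0 : Tendsto δk atTop (nhds 0))
    (uk : ℕ → Y) (hnoise : ∀ k, ‖ubar - uk k‖ ≤ δk k)
    (ak : ℕ → X) (hmin : ∀ k, ak k ∈ D ∧ ∀ a ∈ D,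
      ‖F (ak k) - uk k‖ ^ 2 + β (δk k) * f (ak k) ≤
        ‖F a - uk k‖ ^ 2 + β (δk k) * f a) :
    (∃ σ : ℕ → ℕ, StrictMono σ ∧ ∃ a : X, WeakConv (ak ∘ σ) a) ∧
    (∀ (σ : ℕ → ℕ) (adag : X), StrictMono σ → WeakConv (ak ∘ σ) adag →
      adag ∈ D ∧ F adag = ubar ∧ ∀ a ∈ D, F a = ubar → f adag ≤ f a) := by
  have hδ : Tendsto δk atTop (𝓝[>] 0) := tendsto_nhdsWithin_iff.2 ⟨hδ0, .of_forall hδpos⟩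
  have hq : Tendsto (fun k => δk k ^ 2 / β (δk k)) atTop (𝓝 0) := hδβ.comp hδ
  have htik : ∀ k, IsMinOn (tikhonov F f (β (δk k)) (uk k)) D (ak k) :=
    fun k => isMinOn_iff.2 (hmin k).2
  have hpen : ∀ a ∈ D, F a = ubar → ∀ k, f (ak k) ≤ δk k ^ 2 / β (δk k) + f a :=
    fun a ha hFa k =>
      le_div_add_of_isMinOn_tikhonov (hβpos _ (hδpos k)) (htik k) (hnoise k) ha hFa
  obtain ⟨C, hC⟩ := hq.bddAbove_range
  obtain ⟨M, hM⟩ := exists_norm_le_of_coercive hfcoercive (C := C + f astar) fun k =>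
    (hpen astar hastar hsol k).trans (add_le_add_left (hC ⟨k, rfl⟩) _)
  have hres : Tendsto (fun k => F (ak k) - uk k) atTop (𝓝 0) := by
    refine tendsto_zero_of_norm_sq_le (fun k => norm_sub_sq_le_of_isMinOn_tikhonov
      (hβpos _ (hδpos k)).le (hfnonneg _) (htik k) (hnoise k) hastar hsol) ?_
    simpa using (hδ0.pow 2).add ((hβ0.comp hδ).mul_const (f astar))
  have hdata : Tendsto uk atTop (𝓝 ubar) := by
    rw [tendsto_iff_norm_sub_tendsto_zero]
    exact squeeze_zero (fun _ => norm_nonneg _)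
      (fun k => norm_sub_rev (uk k) ubar ▸ hnoise k) hδ0
  have hFak : Tendsto (fun k => F (ak k)) atTop (𝓝 ubar) := by simpa using hres.add hdata
  refine ⟨hreflX ak ⟨M, hM⟩, fun σ adag hσ hw => ?_⟩
  obtain ⟨hadagD, hFadag⟩ := hFwc (ak ∘ σ) adag ubar (fun k => (hmin _).1) hw
    (weakConv_of_tendsto (hFak.comp hσ.tendsto_atTop))
  refine ⟨hadagD, hFadag, fun a ha hFa => (hfwlsc _ _ hw).trans ?_⟩
  exact liminf_le_of_le_add_of_tendsto_zero (isBoundedUnder_of ⟨0, fun k => hfnonneg _⟩)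
    (fun k => hpen a ha hFa (σ k)) (hq.comp hσ.tendsto_atTop)

/-- convergence of regularized solutions with vanishing noise.
With `β(δ) → 0`, `δ²/β(δ) → 0` as `δ → 0`, `δ_k → 0`, `‖ū − u_k‖ ≤ δ_k`, and
`a_k` minimizing `‖F a − u_k‖² + β(δ_k) f a` over `D`, if the equation
`F a = ū` has a solution in `D`, then `(a_k)` has a weakly convergent
subsequence, and every weak subsequential limit `a†` satisfies `F a† = ū` and
minimizes `f` among all solutions in `D`. -/
theorem tikhonov_convergence
    {X Y : Type*} [NormedAddCommGroup X] [NormedSpace ℝ X] [CompleteSpace X]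
    [NormedAddCommGroup Y] [NormedSpace ℝ Y] [CompleteSpace Y]
    (hreflX : Reflexive' X) (hreflY : Reflexive' Y)
    (D : Set X) (hDconv : Convex ℝ D) (hDclosed : IsClosed D)
    (F : X → Y)
    (hFwc : ∀ (s : ℕ → X) (a : X) (v : Y), (∀ k, s k ∈ D) →
      WeakConv s a → WeakConv (fun k => F (s k)) v → a ∈ D ∧ F a = v)
    (hFwcont : ∀ (s : ℕ → X) (a : X), (∀ k, s k ∈ D) → a ∈ D →
      WeakConv s a → WeakConv (fun k => F (s k)) (F a))
    (f : X → ℝ) (hfnonneg : ∀ a, 0 ≤ f a) (hfconv : ConvexOn ℝ Set.univ f)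
    (hfwlsc : ∀ (s : ℕ → X) (a : X), WeakConv s a →
      f a ≤ liminf (fun k => f (s k)) atTop)
    (hfcoercive : ∀ s : ℕ → X, Tendsto (fun k => ‖s k‖) atTop atTop →
      Tendsto (fun k => f (s k)) atTop atTop)
    (β : ℝ → ℝ) (hβpos : ∀ δ > 0, 0 < β δ)
    (hβ0 : Tendsto β (nhdsWithin 0 (Set.Ioi 0)) (nhds 0))
    (hδβ : Tendsto (fun δ => δ ^ 2 / β δ) (nhdsWithin 0 (Set.Ioi 0)) (nhds 0))
    (ubar : Y) (astar : X) (hastar : astar ∈ D) (hsol : F astar = ubar)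
    (δk : ℕ → ℝ) (hδpos : ∀ k, 0 < δk k) (hδ0 : Tendsto δk atTop (nhds 0))
    (uk : ℕ → Y) (hnoise : ∀ k, ‖ubar - uk k‖ ≤ δk k)
    (ak : ℕ → X) (hmin : ∀ k, ak k ∈ D ∧ ∀ a ∈ D,
      ‖F (ak k) - uk k‖ ^ 2 + β (δk k) * f (ak k) ≤
        ‖F a - uk k‖ ^ 2 + β (δk k) * f a) :
    (∃ σ : ℕ → ℕ, StrictMono σ ∧ ∃ a : X, WeakConv (ak ∘ σ) a) ∧
    (∀ (σ : ℕ → ℕ) (adag : X), StrictMono σ → WeakConv (ak ∘ σ) adag →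
      adag ∈ D ∧ F adag = ubar ∧ ∀ a ∈ D, F a = ubar → f adag ≤ f a) :=
  tikhonov_convergence_general hreflX D F hFwc f hfnonneg hfwlsc hfcoercive β hβpos hβ0 hδβ ubar
    astar hastar hsol δk hδpos hδ0 uk hnoise ak hmin
end
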